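/- Let S = R[x_1,...,x_n] with a monomial order, and let f_1,...,f_m ∈ S be polynomials whose leading coefficients are s-terms (unit times a monomial in a fixed permutable weak regular sequence of R), all having the same leading monomial x^δ. If the leading monomial of Σ c_i f_i (with c_i ∈ R) is strictly smaller than x^δ, then Σ c_i f_i is an R-linear combination of the S'-polynomials S'(f_i,f_j) = lcm(lc(f_i),lc(f_j))·S(f_i,f_j), and each S'(f_i,f_j) has leading monomial strictly smaller than x^δ. -/

import Mathlib

open MvPolynomial

/-- The `s`-monomial with exponent vector `α`: `∏ j, s j ^ α j`. -/
def sMon {R : Type*} [CommRing R] {k : ℕ} (s : Fin k → R) (α : Fin k → ℕ) : R :=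
  ∏ j, s j ^ α j

/-- `s` is a weak regular sequence: each `s i` is a nonzerodivisor modulo the ideal
generated by the preceding terms. -/
def IsWeakRegSeq {R : Type*} [CommRing R] {k : ℕ} (s : Fin k → R) : Prop :=
  ∀ i : Fin k, ∀ t : R,
    t * s i ∈ Ideal.span (s '' {j | j < i}) → t ∈ Ideal.span (s '' {j | j < i})

/-- `s` is a permutable weak regular sequence: every permutation of it is a weak
regular sequence. -/
def IsPermWeakRegSeq {R : Type*} [CommRing R] {k : ℕ} (s : Fin k → R) : Prop :=
  ∀ σ : Equiv.Perm (Fin k), IsWeakRegSeq (s ∘ σ)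

/-- A monomial order on the monomials (exponent vectors) of `MvPolynomial σ R`:
a linear order on `σ →₀ ℕ`, compatible with addition, for which `0` is least. -/
structure MonomialOrd (σ : Type*) where
  le : (σ →₀ ℕ) → (σ →₀ ℕ) → Prop
  refl : ∀ a, le a a
  antisymm : ∀ a b, le a b → le b a → a = b
  trans : ∀ a b c, le a b → le b c → le a c
  total : ∀ a b, le a b ∨ le b a
  add_right : ∀ a b c, le a b → le (a + c) (b + c)
  zero_le : ∀ a, le 0 a

/-- `δ` is the leading monomial of `f` with respect to the monomial order `m`
(by convention the leading monomial of `0` is `0`). -/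
def IsLM {R : Type*} [CommRing R] {σ : Type*} (m : MonomialOrd σ)
    (f : MvPolynomial σ R) (δ : σ →₀ ℕ) : Prop :=
  (f = 0 ∧ δ = 0) ∨ (MvPolynomial.coeff δ f ≠ 0 ∧ ∀ e ∈ f.support, m.le e δ)

/-- The set of leading terms of the members of `G`. -/
def ltSet {R : Type*} [CommRing R] {σ : Type*} (m : MonomialOrd σ)
    (G : Set (MvPolynomial σ R)) : Set (MvPolynomial σ R) :=
  {g | ∃ f ∈ G, f ≠ 0 ∧ ∃ δ, IsLM m f δ ∧
    g = MvPolynomial.monomial δ (MvPolynomial.coeff δ f)}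

/-- `G` is a Gröbner basis of the ideal `I` w.r.t. the monomial order `m`: `G ⊆ I` and the
leading terms of the members of `G` generate the ideal of leading terms of `I`. -/
def IsGroebnerBasis {R : Type*} [CommRing R] {σ : Type*} (m : MonomialOrd σ)
    (G : Set (MvPolynomial σ R)) (I : Ideal (MvPolynomial σ R)) : Prop :=
  G ⊆ (I : Set (MvPolynomial σ R)) ∧
    Ideal.span (ltSet m G) = Ideal.span (ltSet m (I : Set (MvPolynomial σ R)))

/-- `f` reduces to zero modulo `G`: `f = ∑ pᵢ gᵢ` with `gᵢ ∈ G` and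
`lm(pᵢ)·lm(gᵢ) ≤ lm(f)` whenever `pᵢ ≠ 0`. -/
def RedZero {R : Type*} [CommRing R] {σ : Type*} (m : MonomialOrd σ)
    (G : Set (MvPolynomial σ R)) (f : MvPolynomial σ R) : Prop :=
  ∃ (N : ℕ) (g p : Fin N → MvPolynomial σ R) (δ : σ →₀ ℕ),
    IsLM m f δ ∧ (∀ i, g i ∈ G) ∧ f = ∑ i, p i * g i ∧
    ∀ i, p i ≠ 0 → ∀ δp δg, IsLM m (p i) δp → IsLM m (g i) δg → m.le (δp + δg) δ

/-!
Comparing coefficients of `x^δ`, the vector `(cᵢ uᵢ)` is a syzygy of the `s`-monomials `s^{aᵢ}`.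
The linear map `eᵢ ↦ uᵢ⁻¹ fᵢ` sends it to `∑ cᵢ fᵢ` and sends the elementary syzygy
`s^{aᵢ ∨ aⱼ − aᵢ} eᵢ − s^{aᵢ ∨ aⱼ − aⱼ} eⱼ` to `S'(fᵢ, fⱼ)`, so it suffices that the syzygies of
`s`-monomials are generated by the elementary ones. This is proved modulo `(s_j : j ∈ E)` for
exponents vanishing on `E`: pick `t ∉ E` occurring in some exponent; the indices with `aᵢ t = 0`
are treated modulo `(s_j : j ∈ E ∪ {t})`, after which the rest of the relation is divisible by
`s_t`, and regularity of `s_t` modulo `(s_j : j ∈ E)` lets one descend on the total degree.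
The `x^δ` terms cancel in `S'(fᵢ, fⱼ)` because both become `s^{aᵢ ∨ aⱼ}`.
-/

section SMonomial

variable {R : Type*} [CommRing R] {k : ℕ} (s : Fin k → R)

lemma sMon_zero : sMon s 0 = 1 := by
  simp [sMon]

lemma sMon_add (α β : Fin k → ℕ) : sMon s (α + β) = sMon s α * sMon s β := by
  simp only [sMon, Pi.add_apply, pow_add, Finset.prod_mul_distrib]

lemma sMon_single (t : Fin k) : sMon s (Pi.single t 1) = s t := by
  simp [sMon, Pi.single_apply]

lemma sMon_sub_mul {α β : Fin k → ℕ} (h : α ≤ β) : sMon s (β - α) * sMon s α = sMon s β := by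
  rw [← sMon_add]
  congr 1
  funext x
  simp only [Pi.add_apply, Pi.sub_apply]
  have hx : α x ≤ β x := h x
  omega

lemma ite_eq_sMon (P : Prop) [Decidable P] (t : Fin k) :
    (if P then s t else 1) = sMon s (if P then Pi.single t 1 else 0) := by
  split_ifs <;> simp [sMon_single, sMon_zero]

lemma mul_sMon_sub_single (α : Fin k → ℕ) (t : Fin k) :
    s t * sMon s (α - Pi.single t 1) = (if α t = 0 then s t else 1) * sMon s α := by
  rw [ite_eq_sMon, ← sMon_single s t, ← sMon_add, ← sMon_add]
  congr 1
  funext x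
  by_cases hx : x = t
  · subst hx; split_ifs <;> simp [*]; omega
  · split_ifs <;> simp [*]

lemma ite_mul_sMon_sup_sub_single (α β : Fin k → ℕ) (t : Fin k) :
    (if α t = 0 then s t else 1) *
        sMon s ((α - Pi.single t 1) ⊔ (β - Pi.single t 1) - (α - Pi.single t 1)) =
      (if α t = 0 ∧ β t = 0 then s t else 1) * sMon s (α ⊔ β - α) := by
  rw [ite_eq_sMon, ite_eq_sMon, ← sMon_add, ← sMon_add]
  congr 1
  funext x
  by_cases hx : x = t
  · subst hx; split_ifs <;> simp [*] <;> omega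
  · split_ifs <;> simp [*]

end SMonomial

lemma exists_perm_image_Iio_eq {k : ℕ} (E : Finset (Fin k)) {t : Fin k} (ht : t ∉ E) :
    ∃ (σ : Equiv.Perm (Fin k)) (i : Fin k), σ i = t ∧ σ '' {j | j < i} = E := by
  have hEk : E.card < k := by simpa using Finset.card_lt_univ_of_notMem ht
  set i : Fin k := ⟨E.card, hEk⟩
  have hcard : Fintype.card {j // j < i} = Fintype.card {x // x ∈ E} := by
    rw [Fintype.card_subtype, Finset.filter_gt_eq_Iio, Fin.card_Iio]
    simp [i]
  have hcard' : Fintype.card {j // ¬ j < i} = Fintype.card {x // x ∉ E} := by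
    rw [Fintype.card_subtype_compl, Fintype.card_subtype_compl, hcard]
  let e := Fintype.equivOfCardEq hcard
  let f₀ := Fintype.equivOfCardEq hcard'
  let σ := Equiv.subtypeCongr e (f₀.trans (Equiv.swap (f₀ ⟨i, lt_irrefl i⟩) ⟨t, ht⟩))
  have hσ : ∀ j (hj : j < i), σ j = e ⟨j, hj⟩ := fun j hj => by
    simp [σ, Equiv.subtypeCongr, Equiv.sumCompl_symm_apply_of_pos (p := (· < i)) hj]
  refine ⟨σ, i, by simp [σ, Equiv.subtypeCongr], ?_⟩
  ext x
  constructor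
  · rintro ⟨j, hj, rfl⟩
    simp [hσ j hj]
  · intro hx
    exact ⟨e.symm ⟨x, hx⟩, (e.symm ⟨x, hx⟩).2, by simp [hσ _ (e.symm ⟨x, hx⟩).2]⟩

lemma IsPermWeakRegSeq.mem_span_of_mul_mem {R : Type*} [CommRing R] {k : ℕ} {s : Fin k → R}
    (hs : IsPermWeakRegSeq s) {E : Finset (Fin k)} {t : Fin k} (ht : t ∉ E) {r : R}
    (hr : r * s t ∈ Ideal.span (s '' E)) : r ∈ Ideal.span (s '' E) := by
  obtain ⟨σ, i, rfl, hσ⟩ := exists_perm_image_Iio_eq E ht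
  have himage : (s ∘ σ) '' {j | j < i} = s '' E := by rw [Set.image_comp, hσ]
  have := hs σ i r
  rw [himage] at this
  exact this hr

section Syzygy

variable {R : Type*} [CommRing R] {k : ℕ} (s : Fin k → R) {ι : Type*} [DecidableEq ι]

def pairSyz (a : ι → Fin k → ℕ) (p q : ι) : ι → R :=
  Pi.single p (sMon s (a p ⊔ a q - a p)) - Pi.single q (sMon s (a p ⊔ a q - a q))

def syzSpan (a : ι → Fin k → ℕ) (B : Set ι) : Submodule R (ι → R) :=
  Submodule.span R (Set.image2 (pairSyz s a) B B)

variable {s} {a : ι → Fin k → ℕ}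

lemma syzSpan_mono {B B' : Set ι} (h : B ⊆ B') : syzSpan s a B ≤ syzSpan s a B' :=
  Submodule.span_mono (Set.image2_subset h h)

lemma apply_eq_zero_of_mem_syzSpan {B : Set ι} {v : ι → R} (hv : v ∈ syzSpan s a B) {i : ι}
    (hi : i ∉ B) : v i = 0 := by
  induction hv using Submodule.span_induction with
  | mem x hx =>
    obtain ⟨p, hp, q, hq, rfl⟩ := hx
    have hip : i ≠ p := fun h => hi (h ▸ hp)
    have hiq : i ≠ q := fun h => hi (h ▸ hq)
    simp [pairSyz, hip, hiq]
  | zero => rfl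
  | add x y _ _ hx hy => simp [hx, hy]
  | smul r x _ hx => simp [hx]

lemma sum_mul_sMon_eq_zero_of_mem_syzSpan {B : Finset ι} {v : ι → R} (hv : v ∈ syzSpan s a B) :
    ∑ i ∈ B, v i * sMon s (a i) = 0 := by
  induction hv using Submodule.span_induction with
  | mem x hx =>
    obtain ⟨p, hp, q, hq, rfl⟩ := hx
    simp only [pairSyz, Pi.sub_apply, sub_mul, Finset.sum_sub_distrib, Pi.single_apply, ite_mul,
      zero_mul, Finset.sum_ite_eq', Finset.mem_coe.1 hp, Finset.mem_coe.1 hq, if_true]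
    rw [sMon_sub_mul s le_sup_left, sMon_sub_mul s le_sup_right, sub_self]
  | zero => simp
  | add x y _ _ hx hy => simp [add_mul, Finset.sum_add_distrib, hx, hy]
  | smul r x _ hx => simp [mul_assoc, ← Finset.mul_sum, hx]

lemma mul_mem_syzSpan_of_mem_syzSpan_sub_single {B : Set ι} {t : Fin k} {v : ι → R}
    (hv : v ∈ syzSpan s (fun i => a i - Pi.single t 1) B) :
    (fun i => if a i t = 0 then s t else 1) * v ∈ syzSpan s a B := by
  induction hv using Submodule.span_induction with
  | mem x hx =>
    obtain ⟨p, hp, q, hq, rfl⟩ := hx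
    have hpq := ite_mul_sMon_sup_sub_single s (a p) (a q) t
    have hqp := ite_mul_sMon_sup_sub_single s (a q) (a p) t
    rw [sup_comm (a q), sup_comm (a q - _)] at hqp
    simp only [and_comm (a := a q t = 0)] at hqp
    have hgen : (fun i => if a i t = 0 then s t else 1) *
          pairSyz s (fun i => a i - Pi.single t 1) p q =
        (if a p t = 0 ∧ a q t = 0 then s t else 1) • pairSyz s a p q := by
      simp only [pairSyz, mul_sub, smul_sub, ← Pi.single_mul_right, ← Pi.single_smul, smul_eq_mul,
        hpq, hqp]
    rw [hgen]
    exact Submodule.smul_mem _ _ (Submodule.subset_span (Set.mem_image2_of_mem hp hq))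
  | zero => simp
  | add x y _ _ hx hy => rw [mul_add]; exact add_mem hx hy
  | smul r x _ hx => rw [mul_smul_comm]; exact Submodule.smul_mem _ r hx

end Syzygy

section Lifting

variable {R : Type*} [CommRing R] {k : ℕ} {s : Fin k → R} {ι : Type*}
  {a : ι → Fin k → ℕ} {B : Finset ι} {c : ι → R}

lemma sum_filter_mem_span_insert {E : Finset (Fin k)} {t : Fin k}
    (hc : ∑ i ∈ B, c i * sMon s (a i) ∈ Ideal.span (s '' E)) :
    ∑ i ∈ B with a i t = 0, c i * sMon s (a i) ∈ Ideal.span (s '' ↑(insert t E)) := by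
  have hE : Ideal.span (s '' E) ≤ Ideal.span (s '' ↑(insert t E)) :=
    Ideal.span_mono (Set.image_mono (by simp))
  have hst : s t ∈ Ideal.span (s '' ↑(insert t E)) := Ideal.subset_span ⟨t, by simp, rfl⟩
  rw [eq_sub_iff_add_eq.2
    (Finset.sum_filter_add_sum_filter_not B (a · t = 0) fun i => c i * sMon s (a i))]
  refine sub_mem (hE hc) (Ideal.sum_mem _ fun i hi => ?_)
  have hsplit : sMon s (a i) = s t * sMon s (a i - Pi.single t 1) := by
    rw [mul_sMon_sub_single, if_neg (Finset.mem_filter.1 hi).2, one_mul]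
  rw [hsplit]
  exact Ideal.mul_mem_left _ _ (Ideal.mul_mem_right _ _ hst)

variable [DecidableEq ι]

variable (s) in
def PairSyzGenerateMod (E : Finset (Fin k)) (a : ι → Fin k → ℕ) (B : Finset ι) : Prop :=
  ∀ c : ι → R, ∑ i ∈ B, c i * sMon s (a i) ∈ Ideal.span (s '' E) →
    ∃ v ∈ syzSpan s a B, ∀ i ∈ B, c i - v i ∈ Ideal.span (s '' E)

lemma pairSyzGenerateMod_of_forall_eq_zero {E : Finset (Fin k)} (ha : ∀ i ∈ B, a i = 0) :
    PairSyzGenerateMod s E a B := by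
  intro c hc
  rcases B.eq_empty_or_nonempty with rfl | ⟨i₀, hi₀⟩
  · exact ⟨0, zero_mem _, by simp⟩
  have hpair : ∀ i ∈ B, pairSyz s a i i₀ = Pi.single i 1 - Pi.single i₀ 1 := by
    intro i hi
    simp [pairSyz, ha i hi, ha i₀ hi₀, sMon_zero]
  have hc' : ∑ i ∈ B, c i ∈ Ideal.span (s '' E) := by
    rwa [Finset.sum_congr rfl fun i hi => by rw [ha i hi, sMon_zero, mul_one]] at hc
  refine ⟨∑ i ∈ B, c i • pairSyz s a i i₀,
    sum_mem fun i hi =>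
      Submodule.smul_mem _ _ (Submodule.subset_span (Set.mem_image2_of_mem hi hi₀)),
    fun j hj => ?_⟩
  rw [Finset.sum_congr rfl fun i hi => by rw [hpair i hi]]
  simp [Finset.sum_apply, Pi.single_apply, smul_sub, Finset.sum_sub_distrib, hj]
  split_ifs
  exacts [hc', zero_mem _]

/-- If `c` agrees on `{i | a i t = 0}` with a syzygy modulo `(s_j : j ∈ E) + (s t)`, the corrected
relation is divisible by `s t`, and by regularity its quotient is again a relation modulo
`(s_j : j ∈ E)`. -/
lemma sum_ite_mul_sMon_sub_single_mem_span (hs : IsPermWeakRegSeq s) {E : Finset (Fin k)}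
    {t : Fin k} (ht : t ∉ E) (hc : ∑ i ∈ B, c i * sMon s (a i) ∈ Ideal.span (s '' E))
    {σ d : ι → R} (hσ : σ ∈ syzSpan s a ↑(B.filter (a · t = 0)))
    (hd : ∀ i ∈ B, a i t = 0 → c i - σ i - s t * d i ∈ Ideal.span (s '' E)) :
    ∑ i ∈ B, (if a i t = 0 then d i else c i) * sMon s (a i - Pi.single t 1) ∈
      Ideal.span (s '' E) := by
  apply hs.mem_span_of_mul_mem ht
  have key : ∀ i, (if a i t = 0 then d i else c i) * sMon s (a i - Pi.single t 1) * s t =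
      c i * sMon s (a i) -
        (if a i t = 0 then (c i - σ i - s t * d i) + σ i else 0) * sMon s (a i) := by
    intro i
    rw [mul_assoc, mul_comm _ (s t), mul_sMon_sub_single]
    split_ifs <;> ring
  rw [Finset.sum_mul, Finset.sum_congr rfl fun i _ => key i, Finset.sum_sub_distrib]
  refine sub_mem hc ?_
  simp_rw [ite_mul, zero_mul]
  rw [← Finset.sum_filter]
  simp_rw [add_mul]
  rw [Finset.sum_add_distrib, sum_mul_sMon_eq_zero_of_mem_syzSpan hσ, add_zero]
  exact Ideal.sum_mem _ fun i hi =>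
    Ideal.mul_mem_right _ _ (hd i (Finset.mem_filter.1 hi).1 (Finset.mem_filter.1 hi).2)

lemma pairSyzGenerateMod_of_sub_single (hs : IsPermWeakRegSeq s) {E : Finset (Fin k)}
    {t : Fin k} (ht : t ∉ E)
    (hE : PairSyzGenerateMod s (insert t E) a (B.filter (a · t = 0)))
    (hD : PairSyzGenerateMod s E (fun i => a i - Pi.single t 1) B) :
    PairSyzGenerateMod s E a B := by
  intro c hc
  obtain ⟨σ, hσ, hcσ⟩ := hE c (sum_filter_mem_span_insert hc)
  have hdiv : ∀ i, ∃ d, i ∈ B → a i t = 0 → c i - σ i - s t * d ∈ Ideal.span (s '' E) := by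
    intro i
    by_cases hi : i ∈ B ∧ a i t = 0
    · have hmem := hcσ i (Finset.mem_filter.2 hi)
      rw [Finset.coe_insert, Set.image_insert_eq, Ideal.mem_span_insert] at hmem
      obtain ⟨d, z, hz, hdz⟩ := hmem
      exact ⟨d, fun _ _ => by rw [hdz]; convert hz using 1; ring⟩
    · exact ⟨0, fun h₁ h₂ => absurd ⟨h₁, h₂⟩ hi⟩
  choose d hd using hdiv
  obtain ⟨τ, hτ, hcτ⟩ := hD _ (sum_ite_mul_sMon_sub_single_mem_span hs ht hc hσ hd)
  refine ⟨(fun i => if a i t = 0 then s t else 1) * τ + σ,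
    add_mem (mul_mem_syzSpan_of_mem_syzSpan_sub_single hτ)
      (syzSpan_mono (Finset.coe_subset.2 (Finset.filter_subset _ _)) hσ),
    fun i hi => ?_⟩
  have hτi := hcτ i hi
  by_cases hit : a i t = 0
  · simp only [hit, if_true] at hτi
    have hsplit : c i - ((fun i => if a i t = 0 then s t else 1) * τ + σ) i =
        (c i - σ i - s t * d i) + s t * (d i - τ i) := by
      simp only [Pi.add_apply, Pi.mul_apply, hit, if_true]
      ring
    rw [hsplit]
    exact add_mem (hd i hi hit) (Ideal.mul_mem_left _ _ hτi)
  · have hσi : σ i = 0 := apply_eq_zero_of_mem_syzSpan hσ (by simp [hit])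
    simp only [hit, if_false] at hτi
    simpa [hit, hσi] using hτi

theorem pairSyzGenerateMod (hs : IsPermWeakRegSeq s) (E : Finset (Fin k))
    (a : ι → Fin k → ℕ) (B : Finset ι) (ha : ∀ i ∈ B, ∀ x ∈ E, a i x = 0) :
    PairSyzGenerateMod s E a B := by
  by_cases hzero : ∀ i ∈ B, a i = 0
  · exact pairSyzGenerateMod_of_forall_eq_zero hzero
  push Not at hzero
  obtain ⟨i₁, hi₁, hne⟩ := hzero
  obtain ⟨t, ht⟩ : ∃ t, a i₁ t ≠ 0 := Function.ne_iff.1 hne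
  have htE : t ∉ E := fun h => ht (ha i₁ hi₁ t h)
  have hcard : (insert t E)ᶜ.card < Eᶜ.card := by
    rw [Finset.compl_insert]
    exact Finset.card_erase_lt_of_mem (Finset.mem_compl.2 htE)
  have hdeg : ∑ i ∈ B, ∑ x, (a i - Pi.single t 1 : Fin k → ℕ) x < ∑ i ∈ B, ∑ x, a i x := by
    refine Finset.sum_lt_sum (fun i _ => Finset.sum_le_sum fun x _ => Nat.sub_le _ _)
      ⟨i₁, hi₁, Finset.sum_lt_sum (fun x _ => Nat.sub_le _ _) ⟨t, Finset.mem_univ t, ?_⟩⟩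
    simp only [Pi.sub_apply, Pi.single_eq_same]
    omega
  refine pairSyzGenerateMod_of_sub_single hs htE
    (pairSyzGenerateMod hs (insert t E) a (B.filter (a · t = 0)) fun i hi x hx => ?_)
    (pairSyzGenerateMod hs E (fun i => a i - Pi.single t 1) B fun i hi x hx => ?_)
  · rcases Finset.mem_insert.1 hx with rfl | hx
    exacts [(Finset.mem_filter.1 hi).2, ha i (Finset.mem_filter.1 hi).1 x hx]
  · simp [ha i hi x hx]
termination_by (Eᶜ.card, ∑ i ∈ B, ∑ x, a i x)
decreasing_by
  · exact Prod.Lex.left _ _ hcard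
  · exact Prod.Lex.right _ hdeg

theorem mem_syzSpan_univ_of_sum_mul_sMon_eq_zero (hs : IsPermWeakRegSeq s) [Fintype ι]
    (hc : ∑ i, c i * sMon s (a i) = 0) : c ∈ syzSpan s a Set.univ := by
  obtain ⟨v, hv, hcv⟩ := pairSyzGenerateMod hs ∅ a Finset.univ (by simp) c (by simp [hc])
  have hcv' : c = v := funext fun i => by simpa [sub_eq_zero] using hcv i (Finset.mem_univ i)
  simpa [hcv'] using hv

end Lifting

lemma Submodule.exists_sum_sum_smul_eq_of_mem_span_image2_univ {R M α β : Type*} [Semiring R]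
    [AddCommMonoid M] [Module R M] [Fintype α] [Fintype β] {g : α → β → M} {x : M}
    (hx : x ∈ Submodule.span R (Set.image2 g Set.univ Set.univ)) :
    ∃ r : α → β → R, ∑ p, ∑ q, r p q • g p q = x := by
  rw [← Set.image_uncurry_prod, Set.univ_prod_univ, Set.image_univ,
    Submodule.mem_span_range_iff_exists_fun] at hx
  obtain ⟨r, rfl⟩ := hx
  exact ⟨Function.curry r, by rw [Fintype.sum_prod_type]; rfl⟩

lemma IsLM.le_of_mem_support {R σ : Type*} [CommRing R] {m : MonomialOrd σ}
    {f : MvPolynomial σ R} {δ e : σ →₀ ℕ} (h : IsLM m f δ) (he : e ∈ f.support) : m.le e δ := by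
  rcases h with ⟨rfl, -⟩ | ⟨-, h⟩
  · simp at he
  · exact h e he

section SPolynomial

variable {R : Type*} [CommRing R] {k : ℕ} (s : Fin k → R) {ι σ : Type*}
  (u : ι → Rˣ) (a : ι → Fin k → ℕ) (f : ι → MvPolynomial σ R)

/-- `S'(fᵢ, fⱼ)` for `fᵢ` with leading coefficient `uᵢ s^{aᵢ}` and a common leading monomial. -/
noncomputable def sPolyPrime (i j : ι) : MvPolynomial σ R :=
  C (((u i)⁻¹ : Rˣ) * sMon s (a i ⊔ a j - a i)) * f i -
    C (((u j)⁻¹ : Rˣ) * sMon s (a i ⊔ a j - a j)) * f j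

lemma linearCombination_pairSyz [Fintype ι] [DecidableEq ι] (p q : ι) :
    Fintype.linearCombination R (fun i => C (((u i)⁻¹ : Rˣ) : R) * f i) (pairSyz s a p q) =
      sPolyPrime s u a f p q := by
  simp [pairSyz, sPolyPrime, Fintype.linearCombination_apply_single, smul_eq_C_mul, mul_assoc,
    mul_comm]

variable {s u a f} {δ : σ →₀ ℕ}

lemma coeff_sPolyPrime_eq_zero (hlc : ∀ i, coeff δ (f i) = u i * sMon s (a i)) (i j : ι) :
    coeff δ (sPolyPrime s u a f i j) = 0 := by
  have hcancel : ∀ (v : Rˣ) (x y : R), ((v⁻¹ : Rˣ) : R) * x * (v * y) = x * y := fun v x y => by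
    rw [mul_mul_mul_comm, Units.inv_mul, one_mul]
  rw [sPolyPrime, coeff_sub, coeff_C_mul, coeff_C_mul, hlc, hlc, hcancel, hcancel,
    sMon_sub_mul s le_sup_left, sMon_sub_mul s le_sup_right, sub_self]

lemma sPolyPrime_support_lt {m : MonomialOrd σ} (hlm : ∀ i, IsLM m (f i) δ)
    (hlc : ∀ i, coeff δ (f i) = u i * sMon s (a i)) (i j : ι) :
    ∀ e ∈ (sPolyPrime s u a f i j).support, m.le e δ ∧ e ≠ δ := by
  classical
  intro e he
  refine ⟨?_, fun h => mem_support_iff.1 he (h ▸ coeff_sPolyPrime_eq_zero hlc i j)⟩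
  rcases Finset.mem_union.1 (support_sub σ _ _ he) with h | h
  · rw [← smul_eq_C_mul] at h
    exact (hlm i).le_of_mem_support (support_smul h)
  · rw [← smul_eq_C_mul] at h
    exact (hlm j).le_of_mem_support (support_smul h)

end SPolynomial

theorem stmt4_general {R : Type*} [CommRing R] {k n M : ℕ} (s : Fin k → R)
    (hs : IsPermWeakRegSeq s)
    (m : MonomialOrd (Fin n)) (f : Fin M → MvPolynomial (Fin n) R)
    (u : Fin M → Rˣ) (a : Fin M → Fin k → ℕ) (δ : Fin n →₀ ℕ)
    (hlm : ∀ i, IsLM m (f i) δ)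
    (hlc : ∀ i, MvPolynomial.coeff δ (f i) = (u i : R) * sMon s (a i))
    (c : Fin M → R)
    (hsmall : ∀ e ∈ (∑ i, MvPolynomial.C (c i) * f i).support, m.le e δ ∧ e ≠ δ) :
    let SP : Fin M → Fin M → MvPolynomial (Fin n) R := fun i j =>
      MvPolynomial.C (((u i)⁻¹ : Rˣ) * sMon s fun t => max (a i t) (a j t) - a i t) * f i -
      MvPolynomial.C (((u j)⁻¹ : Rˣ) * sMon s fun t => max (a i t) (a j t) - a j t) * f j
    (∃ r : Fin M → Fin M → R,
        ∑ i, MvPolynomial.C (c i) * f i = ∑ i, ∑ j, MvPolynomial.C (r i j) * SP i j) ∧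
    ∀ i j, ∀ e ∈ (SP i j).support, m.le e δ ∧ e ≠ δ := by
  intro SP
  have hSP : SP = sPolyPrime s u a f := rfl
  have hsyz : ∑ i, c i * u i * sMon s (a i) = 0 := by
    have hδ : δ ∉ (∑ i, C (c i) * f i).support := fun h => (hsmall δ h).2 rfl
    rw [mem_support_iff, not_not, coeff_sum] at hδ
    simpa [coeff_C_mul, hlc, mul_assoc] using hδ
  obtain ⟨r, hr⟩ := Submodule.exists_sum_sum_smul_eq_of_mem_span_image2_univ
    (mem_syzSpan_univ_of_sum_mul_sMon_eq_zero hs hsyz)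
  refine ⟨⟨r, ?_⟩, hSP ▸ sPolyPrime_support_lt hlm hlc⟩
  calc ∑ i, C (c i) * f i
      = Fintype.linearCombination R (fun i => C (((u i)⁻¹ : Rˣ) : R) * f i)
          (fun i => c i * u i) := by
        refine Finset.sum_congr rfl fun i _ => ?_
        rw [smul_eq_C_mul, ← mul_assoc, ← C_mul, mul_assoc, Units.mul_inv, mul_one]
    _ = ∑ i, ∑ j, C (r i j) * SP i j := by
        simp [← hr, map_sum, linearCombination_pairSyz, smul_eq_C_mul, hSP]

/-- If `f 0, …, f (M−1)` are of `s`-monomial type with common leading monomial `δ`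
(leading coefficient `u i · s^{a i}`), and all monomials of `∑ cᵢ fᵢ` are strictly smaller
than `δ`, then `∑ cᵢ fᵢ` is an `R`-linear combination of the `S'`-polynomials
`S'(fᵢ,fⱼ) = (uᵢ⁻¹ s^{(aᵢ ∨ aⱼ) − aᵢ}) fᵢ − (uⱼ⁻¹ s^{(aᵢ ∨ aⱼ) − aⱼ}) fⱼ`, each of which has
all monomials strictly smaller than `δ`. -/
theorem stmt4 {R : Type*} [CommRing R] {k n M : ℕ} (s : Fin k → R)
    (hs : IsPermWeakRegSeq s) (hnu : ∀ j, ¬ IsUnit (s j))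
    (m : MonomialOrd (Fin n)) (f : Fin M → MvPolynomial (Fin n) R)
    (u : Fin M → Rˣ) (a : Fin M → Fin k → ℕ) (δ : Fin n →₀ ℕ)
    (hne : ∀ i, f i ≠ 0) (hlm : ∀ i, IsLM m (f i) δ)
    (hlc : ∀ i, MvPolynomial.coeff δ (f i) = (u i : R) * sMon s (a i))
    (c : Fin M → R)
    (hsmall : ∀ e ∈ (∑ i, MvPolynomial.C (c i) * f i).support, m.le e δ ∧ e ≠ δ) :
    let SP : Fin M → Fin M → MvPolynomial (Fin n) R := fun i j =>
      MvPolynomial.C (((u i)⁻¹ : Rˣ) * sMon s fun t => max (a i t) (a j t) - a i t) * f i -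
      MvPolynomial.C (((u j)⁻¹ : Rˣ) * sMon s fun t => max (a i t) (a j t) - a j t) * f j
    (∃ r : Fin M → Fin M → R,
        ∑ i, MvPolynomial.C (c i) * f i = ∑ i, ∑ j, MvPolynomial.C (r i j) * SP i j) ∧
    ∀ i j, ∀ e ∈ (SP i j).support, m.le e δ ∧ e ≠ δ :=
  stmt4_general s hs m f u a δ hlm hlc c hsmall
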